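/- arXiv:2112.13245 — 2 statements merged into one kernel-verified Lean document; each statement's English description precedes it below -/
import Mathlib

section
/- Suppose m ≥ 2. Then for every λ ∈ (0,∞)^m, R(λ̂, λ) < R(λ^O, λ); that is, the second shrinkage estimator λ̂ strictly dominates λ^O at every parameter point under the standardized squared error loss. -/
/-!
Write `S = X·` and `d = S + m - 1`. Then `λ^O_i = λ̂_i + (m - 1) x_i / (2d)`, and expanding the
square shows that the loss of `λ^O` exceeds that of `λ̂` by
`(m - 1)/4 · (2(S + Y) + m - 1) Q / d² - (m - 1) S / d`, where `Q = Σ X_i² / λ_i`.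
Averaging over `Y` uses `E Y = Λ`. Averaging over `X` uses the Poisson identity
`E[X_i g(X)] = λ_i E[g(X + e_i)]`: it turns `E[Q f(S)]` into `E[(S + m) f(S + 1)]`, and it shows
that `S` is Poisson(`Λ`). After one more use of the identity, the risk difference becomes
`E h(S)` for a function `h` that is positive when `m ≥ 2`.

Since risks live in `[0, ∞]`, the difference is never formed: instead
`risk λ^O + E a(S) = risk λ̂ + E b(S)` with `a < b` pointwise, and `risk λ̂ < ∞`.
-/

open scoped BigOperators ENNReal

/-- The Poisson(μ) probability of the value `k`. -/
noncomputable def poissonPmf (mu : ℝ) (k : ℕ) : ℝ :=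
  mu ^ k * Real.exp (-mu) / (Nat.factorial k)

/-- Joint pmf of (X, Y): X_1, …, X_m, Y independent, X_i ~ Po(λ_i), Y ~ Po(Σ λ_i). -/
noncomputable def jointPmf (m : ℕ) (lam : Fin m → ℝ) (x : Fin m → ℕ) (y : ℕ) : ℝ :=
  poissonPmf (∑ i, lam i) y * ∏ i, poissonPmf (lam i) (x i)

/-- Risk of an estimator δ under the standardized squared error loss, valued in [0,∞]. -/
noncomputable def risk (m : ℕ) (δ : (Fin m → ℕ) → ℕ → Fin m → ℝ) (lam : Fin m → ℝ) : ℝ≥0∞ :=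
  ∑' x : Fin m → ℕ, ∑' y : ℕ,
    ENNReal.ofReal ((∑ i, (δ x y i - lam i) ^ 2 / lam i) * jointPmf m lam x y)

/-- The maximum likelihood estimator λ^ML (real division by zero is 0, giving 0/0 = 0). -/
noncomputable def estML (m : ℕ) (x : Fin m → ℕ) (y : ℕ) (i : Fin m) : ℝ :=
  ((∑ j, (x j : ℝ)) + (y : ℝ)) / 2 * ((x i : ℝ) / ∑ j, (x j : ℝ))

/-- The shrinkage estimator λ^O. -/
noncomputable def estO (m : ℕ) (x : Fin m → ℕ) (y : ℕ) (i : Fin m) : ℝ :=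
  ((∑ j, (x j : ℝ)) + (y : ℝ) + (m : ℝ) - 1) / 2 *
    ((x i : ℝ) / ((∑ j, (x j : ℝ)) + (m : ℝ) - 1))

/-- The second shrinkage estimator λ̂. -/
noncomputable def estHat (m : ℕ) (x : Fin m → ℕ) (y : ℕ) (i : Fin m) : ℝ :=
  ((∑ j, (x j : ℝ)) + (y : ℝ)) / 2 * ((x i : ℝ) / ((∑ j, (x j : ℝ)) + (m : ℝ) - 1))

/-- The Clevenson–Zidek estimator λ̂X based on X alone. -/
noncomputable def estCZ (m : ℕ) (x : Fin m → ℕ) (y : ℕ) (i : Fin m) : ℝ :=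
  (∑ j, (x j : ℝ)) * (x i : ℝ) / ((∑ j, (x j : ℝ)) + (m : ℝ) - 1)

open Finset

section Poisson

variable {μ : ℝ}

lemma poissonPmf_nonneg (hμ : 0 ≤ μ) (k : ℕ) : 0 ≤ poissonPmf μ k := by
  unfold poissonPmf; positivity

lemma succ_mul_poissonPmf_succ (μ : ℝ) (k : ℕ) :
    ((k : ℝ) + 1) * poissonPmf μ (k + 1) = μ * poissonPmf μ k := by
  unfold poissonPmf
  rw [Nat.factorial_succ]
  push_cast
  field_simp
  ring

noncomputable def poissonWeight (μ : ℝ) (k : ℕ) : ℝ≥0∞ := ENNReal.ofReal (poissonPmf μ k)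

noncomputable def poissonExpect (μ : ℝ) (f : ℕ → ℝ≥0∞) : ℝ≥0∞ :=
  ∑' k, poissonWeight μ k * f k

lemma poissonWeight_zero (μ : ℝ) : poissonWeight μ 0 = ENNReal.ofReal (Real.exp (-μ)) := by
  simp [poissonWeight, poissonPmf]

lemma tsum_poissonWeight (hμ : 0 ≤ μ) : ∑' k, poissonWeight μ k = 1 := by
  have h : HasSum (poissonPmf μ) 1 := by
    convert ProbabilityTheory.hasSum_one_poissonMeasure μ.toNNReal using 2 with k
    rw [poissonPmf, Real.coe_toNNReal _ hμ]
    ring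
  unfold poissonWeight
  rw [← ENNReal.ofReal_tsum_of_nonneg (poissonPmf_nonneg hμ) h.summable, h.tsum_eq,
    ENNReal.ofReal_one]

lemma natCast_succ_mul_poissonWeight_succ (hμ : 0 ≤ μ) (k : ℕ) :
    ((k + 1 : ℕ) : ℝ≥0∞) * poissonWeight μ (k + 1) = ENNReal.ofReal μ * poissonWeight μ k := by
  rw [poissonWeight, poissonWeight, ← ENNReal.ofReal_natCast,
    ← ENNReal.ofReal_mul (by positivity), ← ENNReal.ofReal_mul hμ]
  push_cast
  rw [succ_mul_poissonPmf_succ]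

lemma poissonExpect_const (hμ : 0 ≤ μ) (c : ℝ≥0∞) : poissonExpect μ (fun _ => c) = c := by
  rw [poissonExpect, ENNReal.tsum_mul_right, tsum_poissonWeight hμ, one_mul]

/-- The Stein–Chen identity. -/
lemma poissonExpect_natCast_mul (hμ : 0 ≤ μ) (f : ℕ → ℝ≥0∞) :
    poissonExpect μ (fun k => k * f k) =
      ENNReal.ofReal μ * poissonExpect μ (fun k => f (k + 1)) := by
  rw [poissonExpect, tsum_eq_zero_add' ENNReal.summable, poissonExpect, ← ENNReal.tsum_mul_left]
  simp only [Nat.cast_zero, zero_mul, mul_zero, zero_add]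
  refine tsum_congr fun k => ?_
  rw [← mul_assoc, mul_left_comm, ← mul_assoc, mul_comm (poissonWeight μ (k + 1)),
    natCast_succ_mul_poissonWeight_succ hμ]
  ring

lemma poissonExpect_add (μ : ℝ) (f g : ℕ → ℝ≥0∞) :
    poissonExpect μ (fun k => f k + g k) = poissonExpect μ f + poissonExpect μ g := by
  simp only [poissonExpect, mul_add, ENNReal.tsum_add]

lemma poissonExpect_const_mul (μ : ℝ) (c : ℝ≥0∞) (f : ℕ → ℝ≥0∞) :
    poissonExpect μ (fun k => c * f k) = c * poissonExpect μ f := by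
  simp only [poissonExpect, mul_left_comm _ c, ENNReal.tsum_mul_left]

lemma poissonExpect_mono {f g : ℕ → ℝ≥0∞} (h : ∀ k, f k ≤ g k) :
    poissonExpect μ f ≤ poissonExpect μ g :=
  ENNReal.tsum_le_tsum fun k => mul_le_mul_of_nonneg_left (h k) zero_le

lemma poissonExpect_ofReal_linear (hμ : 0 ≤ μ) {a b : ℝ} (ha : 0 ≤ a) (hb : 0 ≤ b) :
    poissonExpect μ (fun k => ENNReal.ofReal (a + b * k)) = ENNReal.ofReal (a + b * μ) := by
  have hk (k : ℕ) : ENNReal.ofReal (a + b * k) = ENNReal.ofReal a + k * ENNReal.ofReal b := by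
    rw [ENNReal.ofReal_add ha (by positivity), ENNReal.ofReal_mul' (by positivity),
      ENNReal.ofReal_natCast, mul_comm]
  simp only [hk, poissonExpect_add, poissonExpect_natCast_mul hμ, poissonExpect_const hμ]
  rw [ENNReal.ofReal_add ha (by positivity), ENNReal.ofReal_mul hb, mul_comm]

lemma poissonExpect_ofReal_quadratic (hμ : 0 ≤ μ) {a b : ℝ} (ha : 0 ≤ a) (hb : 0 ≤ b) :
    poissonExpect μ (fun k => ENNReal.ofReal (a + b * k ^ 2)) =
      ENNReal.ofReal (a + b * (μ ^ 2 + μ)) := by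
  have hk (k : ℕ) : ENNReal.ofReal (a + b * k ^ 2) =
      ENNReal.ofReal a + k * ENNReal.ofReal (b * k) := by
    rw [ENNReal.ofReal_add ha (by positivity), ← ENNReal.ofReal_natCast,
      ← ENNReal.ofReal_mul (by positivity)]
    ring_nf
  have hsucc : (fun k : ℕ => ENNReal.ofReal (b * ((k + 1 : ℕ) : ℝ))) =
      fun k : ℕ => ENNReal.ofReal (b + b * k) := by
    funext k; push_cast; ring_nf
  simp only [hk, poissonExpect_add, poissonExpect_natCast_mul hμ, poissonExpect_const hμ, hsucc,
    poissonExpect_ofReal_linear hμ hb hb]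
  rw [← ENNReal.ofReal_mul hμ, ← ENNReal.ofReal_add ha (by positivity)]
  ring_nf

lemma poissonExpect_ofReal_add_mul_succ (hμ : 0 ≤ μ) {f g : ℕ → ℝ} (hf : ∀ k, 0 ≤ f k)
    (hg : ∀ k, 0 ≤ g k) :
    poissonExpect μ (fun k => ENNReal.ofReal (g k + μ * f (k + 1))) =
      poissonExpect μ (fun k => ENNReal.ofReal (g k + k * f k)) := by
  simp only [ENNReal.ofReal_add (hg _) (mul_nonneg hμ (hf _)),
    ENNReal.ofReal_add (hg _) (mul_nonneg (Nat.cast_nonneg _) (hf _)),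
    ENNReal.ofReal_mul hμ, ENNReal.ofReal_mul (Nat.cast_nonneg _), ENNReal.ofReal_natCast,
    poissonExpect_add, poissonExpect_natCast_mul hμ, poissonExpect_const_mul]

lemma poissonExpect_lt_poissonExpect {f g : ℕ → ℝ≥0∞} (hf : poissonExpect μ f ≠ ⊤)
    (hle : ∀ k, f k ≤ g k) (h0 : f 0 < g 0) : poissonExpect μ f < poissonExpect μ g := by
  refine ENNReal.tsum_lt_tsum (i := 0) hf
    (fun k => mul_le_mul_of_nonneg_left (hle k) zero_le) ?_
  rw [poissonWeight_zero]
  exact ENNReal.mul_lt_mul_right (ENNReal.ofReal_pos.2 (Real.exp_pos _)).ne'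
    ENNReal.ofReal_ne_top h0

end Poisson

section PiPoisson

variable {m : ℕ} {lam : Fin m → ℝ}

noncomputable def piPoissonWeight (lam : Fin m → ℝ) (x : Fin m → ℕ) : ℝ≥0∞ :=
  ∏ i, poissonWeight (lam i) (x i)

lemma sum_update_succ (x : Fin m → ℕ) (i : Fin m) :
    ∑ j, Function.update x i (x i + 1) j = ∑ j, x j + 1 := by
  rw [sum_update_of_mem (mem_univ i), ← add_sum_erase _ _ (mem_univ i), sdiff_singleton_eq_erase]
  ring

lemma natCast_succ_mul_piPoissonWeight_update {i : Fin m} (hi : 0 ≤ lam i) (x : Fin m → ℕ) :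
    ((x i + 1 : ℕ) : ℝ≥0∞) * piPoissonWeight lam (Function.update x i (x i + 1)) =
      ENNReal.ofReal (lam i) * piPoissonWeight lam x := by
  have hrest : ∏ j ∈ univ.erase i, poissonWeight (lam j) (Function.update x i (x i + 1) j) =
      ∏ j ∈ univ.erase i, poissonWeight (lam j) (x j) :=
    prod_congr rfl fun j hj => by rw [Function.update_of_ne (ne_of_mem_erase hj)]
  rw [piPoissonWeight, piPoissonWeight, ← mul_prod_erase _ _ (mem_univ i),
    ← mul_prod_erase _ _ (mem_univ i), hrest, Function.update_self, ← mul_assoc,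
    natCast_succ_mul_poissonWeight_succ hi, mul_assoc]

lemma tsum_piPoissonWeight_natCast_mul {i : Fin m} (hi : 0 ≤ lam i)
    (g : (Fin m → ℕ) → ℝ≥0∞) :
    ∑' x, piPoissonWeight lam x * (x i * g x) = ENNReal.ofReal (lam i) *
      ∑' x, piPoissonWeight lam x * g (Function.update x i (x i + 1)) := by
  set ψ : (Fin m → ℕ) → (Fin m → ℕ) := fun x => Function.update x i (x i + 1)
  have hψ : Function.Injective ψ :=
    Function.LeftInverse.injective (g := fun x => Function.update x i (x i - 1)) fun x => by
      simp [ψ]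
  have hsupp : Function.support (fun x => piPoissonWeight lam x * (x i * g x)) ⊆ Set.range ψ := by
    intro x hx
    have hxi : x i ≠ 0 := fun h => hx (by simp [h])
    exact ⟨Function.update x i (x i - 1), by simp [ψ, Nat.sub_add_cancel (Nat.pos_of_ne_zero hxi)]⟩
  rw [← hψ.tsum_eq hsupp, ← ENNReal.tsum_mul_left]
  refine tsum_congr fun x => ?_
  simp only [ψ, Function.update_self]
  rw [← mul_assoc, mul_comm (piPoissonWeight lam _), natCast_succ_mul_piPoissonWeight_update hi]
  ring

lemma tsum_piPoissonWeight_sum_mul (hlam : ∀ i, 0 ≤ lam i) (g : ℕ → ℝ≥0∞) :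
    ∑' x, piPoissonWeight lam x * ((∑ j, x j : ℕ) * g (∑ j, x j)) =
      ENNReal.ofReal (∑ i, lam i) * ∑' x, piPoissonWeight lam x * g (∑ j, x j + 1) := by
  simp only [Nat.cast_sum, sum_mul, mul_sum]
  rw [Summable.tsum_finsetSum fun _ _ => ENNReal.summable,
    ENNReal.ofReal_sum_of_nonneg fun i _ => hlam i, sum_mul]
  refine sum_congr rfl fun i _ => ?_
  simp only [tsum_piPoissonWeight_natCast_mul (hlam i), sum_update_succ]

/-- `S = Σ X_j` is Poisson(`Λ`): by the Stein–Chen identity in each coordinate, its law `p`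
satisfies `(n + 1) p(n + 1) = Λ p(n)`, and `p(0) = e^{-Λ}`. -/
lemma tsum_piPoissonWeight_indicator (hlam : ∀ i, 0 ≤ lam i) (n : ℕ) :
    ∑' x, piPoissonWeight lam x * (if ∑ j, x j = n then 1 else 0) =
      poissonWeight (∑ i, lam i) n := by
  induction n with
  | zero =>
    refine (tsum_eq_single 0 fun x hx => ?_).trans ?_
    · have hsum : ∑ j, x j ≠ 0 := fun h =>
        hx (funext fun j => (sum_eq_zero_iff.1 h) j (mem_univ j))
      simp [hsum]
    · simp only [Pi.zero_apply, sum_const_zero, if_true, mul_one, piPoissonWeight,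
        poissonWeight_zero, ← ENNReal.ofReal_prod_of_nonneg fun _ _ => (Real.exp_pos _).le,
        ← Real.exp_sum, sum_neg_distrib]
  | succ n ih =>
    have h := tsum_piPoissonWeight_sum_mul hlam fun s => if s = n + 1 then 1 else 0
    simp only [Nat.add_right_cancel_iff, ih] at h
    have hcoef (x : Fin m → ℕ) : piPoissonWeight lam x *
        ((∑ j, x j : ℕ) * if ∑ j, x j = n + 1 then (1 : ℝ≥0∞) else 0) =
        ((n + 1 : ℕ) : ℝ≥0∞) *
          (piPoissonWeight lam x * if ∑ j, x j = n + 1 then 1 else 0) := by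
      split_ifs with hx <;> simp [hx, mul_comm]
    rw [tsum_congr hcoef, ENNReal.tsum_mul_left,
      ← natCast_succ_mul_poissonWeight_succ (sum_nonneg fun i _ => hlam i)] at h
    exact (ENNReal.mul_right_inj (by simp) (ENNReal.natCast_ne_top _)).1 h

theorem tsum_piPoissonWeight_comp_sum (hlam : ∀ i, 0 ≤ lam i) (f : ℕ → ℝ≥0∞) :
    ∑' x, piPoissonWeight lam x * f (∑ j, x j) = poissonExpect (∑ i, lam i) f := by
  have hsplit (x : Fin m → ℕ) : piPoissonWeight lam x * f (∑ j, x j) =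
      ∑' n, piPoissonWeight lam x * (if ∑ j, x j = n then 1 else 0) * f n := by
    rw [tsum_eq_single (∑ j, x j) fun n hn => by simp [Ne.symm hn]]
    simp
  simp only [hsplit, poissonExpect]
  rw [ENNReal.tsum_comm]
  simp only [ENNReal.tsum_mul_right, tsum_piPoissonWeight_indicator hlam]

theorem tsum_piPoissonWeight_sum_sq_div_mul (hlam : ∀ i, 0 < lam i) {f : ℕ → ℝ}
    (hf : ∀ n, 0 ≤ f n) :
    ∑' x, piPoissonWeight lam x *
        ENNReal.ofReal ((∑ i, (x i : ℝ) ^ 2 / lam i) * f (∑ j, x j)) =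
      poissonExpect (∑ i, lam i) (fun n => ENNReal.ofReal ((n + m) * f (n + 1))) := by
  have hsplit (x : Fin m → ℕ) :
      ENNReal.ofReal ((∑ i, (x i : ℝ) ^ 2 / lam i) * f (∑ j, x j)) =
        ∑ i, (x i : ℝ≥0∞) * ENNReal.ofReal (x i / lam i * f (∑ j, x j)) := by
    rw [sum_mul, ENNReal.ofReal_sum_of_nonneg fun i _ => by
      have := hlam i; have := hf (∑ j, x j); positivity]
    refine sum_congr rfl fun i _ => ?_
    rw [← ENNReal.ofReal_natCast, ← ENNReal.ofReal_mul (Nat.cast_nonneg _)]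
    ring_nf
  have hshift (i : Fin m) (x : Fin m → ℕ) : ENNReal.ofReal (lam i) *
      ENNReal.ofReal (((x i + 1 : ℕ) : ℝ) / lam i * f (∑ j, x j + 1)) =
      ENNReal.ofReal ((x i + 1 : ℕ) * f (∑ j, x j + 1)) := by
    rw [← ENNReal.ofReal_mul (hlam i).le]
    field_simp [(hlam i).ne']
  simp only [hsplit, mul_sum]
  rw [Summable.tsum_finsetSum fun _ _ => ENNReal.summable]
  simp only [tsum_piPoissonWeight_natCast_mul (hlam _).le, Function.update_self, sum_update_succ,
    ← ENNReal.tsum_mul_left, mul_left_comm (ENNReal.ofReal (lam _)), hshift]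
  rw [← Summable.tsum_finsetSum fun _ _ => ENNReal.summable,
    ← tsum_piPoissonWeight_comp_sum fun i => (hlam i).le]
  refine tsum_congr fun x => ?_
  rw [← mul_sum, ← ENNReal.ofReal_sum_of_nonneg fun i _ => by
    have := hf (∑ j, x j + 1); positivity, ← sum_mul]
  push_cast
  simp [sum_add_distrib]

end PiPoisson

section Risk

variable {m : ℕ} {lam : Fin m → ℝ}

noncomputable def stdLoss (δ : (Fin m → ℕ) → ℕ → Fin m → ℝ) (lam : Fin m → ℝ)
    (x : Fin m → ℕ) (y : ℕ) : ℝ :=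
  ∑ i, (δ x y i - lam i) ^ 2 / lam i

lemma stdLoss_nonneg (hlam : ∀ i, 0 ≤ lam i) (δ : (Fin m → ℕ) → ℕ → Fin m → ℝ)
    (x : Fin m → ℕ) (y : ℕ) : 0 ≤ stdLoss δ lam x y :=
  sum_nonneg fun i _ => div_nonneg (sq_nonneg _) (hlam i)

lemma risk_eq_tsum_poissonExpect (hlam : ∀ i, 0 ≤ lam i) (δ : (Fin m → ℕ) → ℕ → Fin m → ℝ) :
    risk m δ lam = ∑' x, piPoissonWeight lam x *
      poissonExpect (∑ i, lam i) (fun y => ENNReal.ofReal (stdLoss δ lam x y)) := by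
  refine tsum_congr fun x => ?_
  rw [poissonExpect, ← ENNReal.tsum_mul_left]
  refine tsum_congr fun y => ?_
  rw [jointPmf, ← stdLoss, ENNReal.ofReal_mul (stdLoss_nonneg hlam δ x y),
    ENNReal.ofReal_mul (poissonPmf_nonneg (sum_nonneg fun i _ => hlam i) y),
    ENNReal.ofReal_prod_of_nonneg fun i _ => poissonPmf_nonneg (hlam i) (x i)]
  simp only [piPoissonWeight, poissonWeight]
  ring

lemma risk_add_eq_risk_add (hlam : ∀ i, 0 ≤ lam i) {δ δ' : (Fin m → ℕ) → ℕ → Fin m → ℝ}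
    {a b : (Fin m → ℕ) → ℕ → ℝ} (ha : ∀ x y, 0 ≤ a x y) (hb : ∀ x y, 0 ≤ b x y)
    (h : ∀ x y, stdLoss δ lam x y + a x y = stdLoss δ' lam x y + b x y) :
    risk m δ lam + ∑' x, piPoissonWeight lam x *
        poissonExpect (∑ i, lam i) (fun y => ENNReal.ofReal (a x y)) =
      risk m δ' lam + ∑' x, piPoissonWeight lam x *
        poissonExpect (∑ i, lam i) (fun y => ENNReal.ofReal (b x y)) := by
  simp only [risk_eq_tsum_poissonExpect hlam, ← ENNReal.tsum_add, ← mul_add,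
    ← poissonExpect_add, ← ENNReal.ofReal_add (stdLoss_nonneg hlam _ _ _) (ha _ _),
    ← ENNReal.ofReal_add (stdLoss_nonneg hlam _ _ _) (hb _ _), h]

end Risk

section Shrinkage

variable {m : ℕ} {lam : Fin m → ℝ}

lemma sum_add_sub_one_pos (hm : 2 ≤ m) (x : Fin m → ℕ) :
    0 < ((∑ j, x j : ℕ) : ℝ) + m - 1 := by
  have : (2 : ℝ) ≤ m := by exact_mod_cast hm
  linarith [(∑ j, x j).cast_nonneg (α := ℝ)]

/-- The negative part of the excess loss is moved to the left, so that both sides are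
nonnegative and can be integrated in `[0, ∞]`. -/
lemma stdLoss_estO_add (hm : 2 ≤ m) (hlam : ∀ i, lam i ≠ 0) (x : Fin m → ℕ) (y : ℕ) :
    stdLoss (estO m) lam x y + (m - 1) * ((∑ j, x j : ℕ) / ((∑ j, x j : ℕ) + m - 1)) =
      stdLoss (estHat m) lam x y + (m - 1) / 4 * ((2 * ((∑ j, x j : ℕ) + y) + m - 1) *
        (∑ i, (x i : ℝ) ^ 2 / lam i) / ((∑ j, x j : ℕ) + m - 1) ^ 2) := by
  have hd := (sum_add_sub_one_pos hm x).ne'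
  simp only [stdLoss, estO, estHat, Nat.cast_sum] at hd ⊢
  rw [sum_div, mul_sum, mul_sum, sum_div, mul_sum, ← sum_add_distrib, ← sum_add_distrib]
  refine sum_congr rfl fun i _ => ?_
  field_simp [hlam i]
  ring

/-- The term `2Λ / (S + m)` produced by averaging over `Y` is traded for `2S / (S + m - 1)` by the
Stein–Chen identity, which makes the final comparison pointwise in `S`. -/
lemma tsum_poissonExpect_estHat_excess (hm : 2 ≤ m) (hlam : ∀ i, 0 < lam i) :
    ∑' x, piPoissonWeight lam x * poissonExpect (∑ i, lam i) (fun y => ENNReal.ofReal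
        ((m - 1) / 4 * ((2 * ((∑ j, x j : ℕ) + y) + m - 1) *
          (∑ i, (x i : ℝ) ^ 2 / lam i) / ((∑ j, x j : ℕ) + m - 1) ^ 2))) =
      poissonExpect (∑ i, lam i) (fun n => ENNReal.ofReal
        ((m - 1) / 4 * ((2 * n + m + 1) / (n + m)) + n * ((m - 1) / 2 / (n + m - 1)))) := by
  have hm' : (2 : ℝ) ≤ m := by exact_mod_cast hm
  have hΛ : 0 ≤ ∑ i, lam i := sum_nonneg fun i _ => (hlam i).le
  have hd (n : ℕ) : 0 < (n : ℝ) + m - 1 := by linarith [n.cast_nonneg (α := ℝ)]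
  set g : ℕ → ℝ := fun n => (m - 1) / 4 * (2 * n + m - 1 + 2 * ∑ i, lam i) / (n + m - 1) ^ 2
  have hg (n : ℕ) : 0 ≤ g n :=
    div_nonneg (mul_nonneg (by linarith) (by linarith [hd n])) (sq_nonneg _)
  have hinner (x : Fin m → ℕ) : poissonExpect (∑ i, lam i) (fun y => ENNReal.ofReal
      ((m - 1) / 4 * ((2 * ((∑ j, x j : ℕ) + y) + m - 1) *
        (∑ i, (x i : ℝ) ^ 2 / lam i) / ((∑ j, x j : ℕ) + m - 1) ^ 2))) =
      ENNReal.ofReal ((∑ i, (x i : ℝ) ^ 2 / lam i) * g (∑ j, x j)) := by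
    set S : ℝ := ((∑ j, x j : ℕ) : ℝ)
    set Q := ∑ i, (x i : ℝ) ^ 2 / lam i
    have hQ : 0 ≤ Q := sum_nonneg fun i _ => div_nonneg (sq_nonneg _) (hlam i).le
    have hlin (y : ℕ) : (m - 1) / 4 * ((2 * (S + y) + m - 1) * Q / (S + m - 1) ^ 2) =
        (m - 1) / 4 * (2 * S + m - 1) * Q / (S + m - 1) ^ 2 +
          (m - 1) / 2 * Q / (S + m - 1) ^ 2 * y := by
      ring
    simp only [hlin]
    rw [poissonExpect_ofReal_linear hΛ
      (div_nonneg (mul_nonneg (mul_nonneg (by linarith) (by linarith [hd (∑ j, x j)])) hQ)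
        (sq_nonneg _))
      (div_nonneg (mul_nonneg (by linarith) hQ) (sq_nonneg _))]
    congr 1
    simp only [g]
    ring
  simp only [hinner]
  rw [tsum_piPoissonWeight_sum_sq_div_mul hlam hg]
  have hsucc (n : ℕ) : ((n : ℝ) + m) * g (n + 1) =
      (m - 1) / 4 * ((2 * n + m + 1) / (n + m)) +
        (∑ i, lam i) * ((m - 1) / 2 / (((n + 1 : ℕ) : ℝ) + m - 1)) := by
    have := hd (n + 1)
    simp only [g]
    push_cast at this ⊢
    field_simp
    ring
  simp only [hsucc]
  exact poissonExpect_ofReal_add_mul_succ hΛ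
    (fun n => div_nonneg (by linarith) (hd n).le)
    (fun n => mul_nonneg (by linarith) (div_nonneg (by positivity) (by positivity)))

lemma risk_estO_add_eq_risk_estHat_add (hm : 2 ≤ m) (hlam : ∀ i, 0 < lam i) :
    risk m (estO m) lam + poissonExpect (∑ i, lam i)
        (fun n => ENNReal.ofReal ((m - 1) * (n / (n + m - 1)))) =
      risk m (estHat m) lam + poissonExpect (∑ i, lam i) (fun n => ENNReal.ofReal
        ((m - 1) / 4 * ((2 * n + m + 1) / (n + m)) + n * ((m - 1) / 2 / (n + m - 1)))) := by
  have hm' : (2 : ℝ) ≤ m := by exact_mod_cast hm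
  have hd (x : Fin m → ℕ) := sum_add_sub_one_pos hm x
  have h := risk_add_eq_risk_add (fun i => (hlam i).le)
    (fun x _ => mul_nonneg (by linarith) (div_nonneg (Nat.cast_nonneg _) (hd x).le))
    (fun x y => mul_nonneg (by linarith) (div_nonneg (mul_nonneg (by linarith [hd x])
      (sum_nonneg fun i _ => div_nonneg (sq_nonneg _) (hlam i).le)) (sq_nonneg _)))
    (stdLoss_estO_add hm (fun i => (hlam i).ne'))
  rwa [tsum_poissonExpect_estHat_excess hm hlam, tsum_congr fun x => by
    rw [poissonExpect_const (sum_nonneg fun i _ => (hlam i).le)],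
    tsum_piPoissonWeight_comp_sum (fun i => (hlam i).le)
      (fun n => ENNReal.ofReal ((m - 1) * (n / (n + m - 1))))] at h

lemma stdLoss_estHat_le (hm : 2 ≤ m) (hlam : ∀ i, 0 < lam i) (x : Fin m → ℕ) (y : ℕ) :
    stdLoss (estHat m) lam x y ≤
      ∑ i, lam i + (∑ i, (2 * lam i)⁻¹) * ((∑ j, x j : ℕ) ^ 2 + (y : ℝ) ^ 2) := by
  have hm' : (2 : ℝ) ≤ m := by exact_mod_cast hm
  have hd := sum_add_sub_one_pos hm x
  simp only [Nat.cast_sum] at hd ⊢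
  rw [stdLoss, sum_mul, ← sum_add_distrib]
  refine sum_le_sum fun i _ => ?_
  set S := ∑ j, (x j : ℝ)
  set a := estHat m x y i
  have hxi : (x i : ℝ) ≤ S := single_le_sum (fun j _ => Nat.cast_nonneg (x j)) (mem_univ i)
  have ha : 0 ≤ a := by unfold a estHat; positivity
  have ha' : a ≤ (S + y) / 2 := by
    unfold a estHat
    exact mul_le_of_le_one_right (by positivity) ((div_le_one hd).2 (by linarith))
  have hsq : (a - lam i) ^ 2 ≤ lam i ^ 2 + (S ^ 2 + y ^ 2) / 2 := by
    nlinarith [hlam i, sq_nonneg (S - y)]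
  have hcancel : (2 * lam i)⁻¹ * (S ^ 2 + y ^ 2) * lam i = (S ^ 2 + y ^ 2) / 2 := by
    field_simp [(hlam i).ne']
  rw [div_le_iff₀ (hlam i), add_mul, hcancel]
  linarith

lemma risk_estHat_ne_top (hm : 2 ≤ m) (hlam : ∀ i, 0 < lam i) : risk m (estHat m) lam ≠ ⊤ := by
  set Λ := ∑ i, lam i
  set C := ∑ i, (2 * lam i)⁻¹
  have hΛ : 0 ≤ Λ := sum_nonneg fun i _ => (hlam i).le
  have hC : 0 ≤ C := sum_nonneg fun i _ => by have := hlam i; positivity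
  have hle : risk m (estHat m) lam ≤ ∑' x, piPoissonWeight lam x *
      poissonExpect Λ (fun y => ENNReal.ofReal ((Λ + C * (∑ j, x j : ℕ) ^ 2) + C * y ^ 2)) := by
    rw [risk_eq_tsum_poissonExpect fun i => (hlam i).le]
    refine ENNReal.tsum_le_tsum fun x => mul_le_mul_of_nonneg_left
      (poissonExpect_mono fun y => ENNReal.ofReal_le_ofReal ?_) zero_le
    linarith [stdLoss_estHat_le hm hlam x y]
  have hquad (x : Fin m → ℕ) : poissonExpect Λ
      (fun y => ENNReal.ofReal ((Λ + C * (∑ j, x j : ℕ) ^ 2) + C * y ^ 2)) =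
      ENNReal.ofReal ((Λ + C * (Λ ^ 2 + Λ)) + C * (∑ j, x j : ℕ) ^ 2) := by
    rw [poissonExpect_ofReal_quadratic hΛ (add_nonneg hΛ (mul_nonneg hC (sq_nonneg _))) hC]
    ring_nf
  refine ne_top_of_le_ne_top ?_ hle
  simp only [hquad]
  rw [tsum_piPoissonWeight_comp_sum (fun i => (hlam i).le)
    (fun n => ENNReal.ofReal ((Λ + C * (Λ ^ 2 + Λ)) + C * n ^ 2)),
    poissonExpect_ofReal_quadratic hΛ (by positivity) hC]
  exact ENNReal.ofReal_ne_top

lemma poissonExpect_excess_lt (hm : 2 ≤ m) {μ : ℝ} (hμ : 0 ≤ μ) :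
    poissonExpect μ (fun n => ENNReal.ofReal ((m - 1) * (n / (n + m - 1)))) <
      poissonExpect μ (fun n => ENNReal.ofReal
        ((m - 1) / 4 * ((2 * n + m + 1) / (n + m)) + n * ((m - 1) / 2 / (n + m - 1)))) := by
  have hm' : (2 : ℝ) ≤ m := by exact_mod_cast hm
  have hlt (n : ℕ) : ((m : ℝ) - 1) * (n / (n + m - 1)) <
      (m - 1) / 4 * ((2 * n + m + 1) / (n + m)) + n * ((m - 1) / 2 / (n + m - 1)) := by
    have hn := n.cast_nonneg (α := ℝ)
    have hgap : ((m : ℝ) - 1) / 4 * ((2 * n + m + 1) / (n + m)) +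
        n * ((m - 1) / 2 / (n + m - 1)) - (m - 1) * (n / (n + m - 1)) =
        (m - 1) * ((m - 1) * n + (m ^ 2 - 1)) / (4 * (n + m) * (n + m - 1)) := by
      field_simp [show (n : ℝ) + m ≠ 0 by linarith, show (n : ℝ) + m - 1 ≠ 0 by linarith]
      ring
    rw [← sub_pos, hgap]
    exact div_pos (mul_pos (by linarith) (by nlinarith)) (by nlinarith)
  have hbdd : poissonExpect μ (fun n => ENNReal.ofReal ((m - 1) * (n / (n + m - 1)))) ≤
      ENNReal.ofReal (m - 1) := by
    rw [← poissonExpect_const hμ (ENNReal.ofReal (m - 1))]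
    refine poissonExpect_mono fun n => ENNReal.ofReal_le_ofReal ?_
    have hn := n.cast_nonneg (α := ℝ)
    exact mul_le_of_le_one_right (by linarith) ((div_le_one (by linarith)).2 (by linarith))
  exact poissonExpect_lt_poissonExpect (ne_top_of_le_ne_top ENNReal.ofReal_ne_top hbdd)
    (fun n => ENNReal.ofReal_le_ofReal (hlt n).le)
    ((ENNReal.ofReal_lt_ofReal_iff_of_nonneg (by simp)).2 (hlt 0))

end Shrinkage

theorem stmt_3 (m : ℕ) (hm : 2 ≤ m) (lam : Fin m → ℝ) (hlam : ∀ i, 0 < lam i) :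
    risk m (estHat m) lam < risk m (estO m) lam := by
  refine lt_of_add_lt_add_right (a := poissonExpect (∑ i, lam i)
    (fun n => ENNReal.ofReal ((m - 1) * (n / (n + m - 1))))) ?_
  rw [risk_estO_add_eq_risk_estHat_add hm hlam]
  exact ENNReal.add_lt_add_left (risk_estHat_ne_top hm hlam)
    (poissonExpect_excess_lt hm (sum_nonneg fun i _ => (hlam i).le))
end

section
/- Suppose m = 1. Then sup_{λ ∈ (0,∞)} R(λ^O, λ) > 1/2; in fact there exists λ_1 > 0 with R(λ^O, (λ_1)) > 1/2 (the paper's computation shows this holds for every λ_1 > 1/3, since for m = 1 the risk equals 1/2 + ((3λ_1 − 1)/4)·e^{−λ_1}). -/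
/-!
Given `X = x ≥ 1`, the estimator is `(x + Y)/2` with `Y ~ Po(λ)`, so its conditional risk is
`((x - λ)² + λ)/(4λ)` by the Poisson mean and variance; averaged over `X ~ Po(λ)` this gives
exactly `1/2`. At `X = 0` the estimator is `0`, with loss `λ` instead of `(λ + λ²)/(4λ)`, and
this single atom of mass `e^{-λ}` adds `(3λ - 1)/4 · e^{-λ}` to the risk.
-/

open scoped BigOperators ENNReal

namespace poissonPmf

theorem hasSum (l : ℝ) : HasSum (poissonPmf l) 1 := by
  convert! (NormedSpace.expSeries_div_hasSum_exp l).mul_left (Real.exp (-l)) using 1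
  · funext n
    rw [poissonPmf]
    ring
  · rw [← Real.exp_eq_exp_ℝ, ← Real.exp_add, neg_add_cancel, Real.exp_zero]

theorem succ_mul (l : ℝ) (n : ℕ) :
    ((n : ℝ) + 1) * poissonPmf l (n + 1) = l * poissonPmf l n := by
  have : (n.factorial : ℝ) ≠ 0 := by positivity
  simp only [poissonPmf, Nat.factorial_succ]
  push_cast
  field_simp
  ring

/-- Size-biasing: multiplying the weights by `n` amounts to shifting the index and scaling by
`l`, since `n * poissonPmf l n = l * poissonPmf l (n - 1)`. -/
theorem hasSum_natCast_mul {l a : ℝ} {f : ℕ → ℝ} (h : HasSum (fun n => f n * poissonPmf l n) a) :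
    HasSum (fun n => n * f (n - 1) * poissonPmf l n) (l * a) := by
  rw [← hasSum_nat_add_iff' 1]
  simp only [Finset.range_one, Finset.sum_singleton, Nat.cast_zero, zero_mul, sub_zero,
    Nat.add_sub_cancel, Nat.cast_add, Nat.cast_one]
  convert! h.mul_left l using 1
  funext n
  rw [mul_right_comm, succ_mul]
  ring

theorem hasSum_natCast_mul_self (l : ℝ) : HasSum (fun n : ℕ => (n : ℝ) * poissonPmf l n) l := by
  simpa using hasSum_natCast_mul (f := fun _ => 1) (a := 1) (by simpa using hasSum l)

theorem hasSum_natCast_sq_mul (l : ℝ) :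
    HasSum (fun n : ℕ => (n : ℝ) ^ 2 * poissonPmf l n) (l * (l + 1)) := by
  convert hasSum_natCast_mul (f := fun n => (n : ℝ) + 1)
    (by simpa [add_mul] using (hasSum_natCast_mul_self l).add (hasSum l)) using 2 with n
  rcases n with _ | n <;> simp [sq]

theorem hasSum_sub_sq_mul (l c : ℝ) :
    HasSum (fun n : ℕ => ((n : ℝ) - c) ^ 2 * poissonPmf l n) (l + (l - c) ^ 2) := by
  convert! (((hasSum_natCast_sq_mul l).sub ((hasSum_natCast_mul_self l).mul_left (2 * c))).add
    ((hasSum l).mul_left (c ^ 2))) using 1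
  · funext n
    ring
  · ring

end poissonPmf

theorem ENNReal.tsum_tsum_ofReal_of_hasSum {α β : Type*} {f : α → β → ℝ} {g : α → ℝ} {a : ℝ}
    (hf : ∀ x y, 0 ≤ f x y) (hfg : ∀ x, HasSum (f x) (g x)) (hg : HasSum g a) :
    ∑' x, ∑' y, ENNReal.ofReal (f x y) = ENNReal.ofReal a := by
  have hg_nonneg : ∀ x, 0 ≤ g x := fun x => (hfg x).nonneg (hf x)
  simp_rw [← ENNReal.ofReal_tsum_of_nonneg (hf _) (hfg _).summable, (hfg _).tsum_eq,
    ← ENNReal.ofReal_tsum_of_nonneg hg_nonneg hg.summable, hg.tsum_eq]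

theorem estO_one_apply (x : Fin 1 → ℕ) (y : ℕ) :
    estO 1 x y 0 = ((x 0 : ℝ) + y) / 2 * ((x 0 : ℝ) / x 0) := by
  simp [estO]

/-- The risk of `λ^O` for `m = 1` conditional on `X = x`; at `x = 0` the estimator is `0`. -/
noncomputable def condRiskO (l : ℝ) (x : ℕ) : ℝ :=
  if x = 0 then l else (l + (x - l) ^ 2) / (4 * l)

theorem hasSum_lossO_one {l : ℝ} (hl : l ≠ 0) (x : ℕ) :
    HasSum (fun y : ℕ => ((((x : ℝ) + y) / 2 * ((x : ℝ) / x) - l) ^ 2 / l) * poissonPmf l y)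
      (condRiskO l x) := by
  obtain rfl | hx := eq_or_ne x 0
  · simpa [condRiskO, sq, hl] using (poissonPmf.hasSum l).mul_left l
  · have hx' : (x : ℝ) ≠ 0 := Nat.cast_ne_zero.2 hx
    -- given `X = x ≠ 0`, the loss is `(Y - (2l - x))² / (4l)`
    convert! (poissonPmf.hasSum_sub_sq_mul l (2 * l - x)).div_const (4 * l) using 1
    · funext y
      rw [div_self hx']
      field_simp
      ring
    · rw [condRiskO, if_neg hx]
      ring

theorem hasSum_condRiskO_mul {l : ℝ} (hl : l ≠ 0) :
    HasSum (fun x => condRiskO l x * poissonPmf l x) (1 / 2 + (3 * l - 1) / 4 * Real.exp (-l)) := by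
  have hquad := ((poissonPmf.hasSum_sub_sq_mul l l).add ((poissonPmf.hasSum l).mul_left l)).div_const
    (4 * l)
  convert! hquad.update 0 (l * poissonPmf l 0) using 1
  · funext x
    rcases x with _ | x
    · simp [condRiskO]
    · rw [Function.update_of_ne x.succ_ne_zero, condRiskO, if_neg x.succ_ne_zero]
      ring
  · simp only [poissonPmf, Nat.cast_zero, pow_zero, Nat.factorial_zero, Nat.cast_one, div_one]
    field_simp
    ring

theorem risk_estO_one {lam : Fin 1 → ℝ} (hl : 0 < lam 0) :
    risk 1 (estO 1) lam = ENNReal.ofReal (1 / 2 + (3 * lam 0 - 1) / 4 * Real.exp (-lam 0)) := by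
  have hsum := (Equiv.funUnique (Fin 1) ℕ).hasSum_iff.2 (hasSum_condRiskO_mul hl.ne')
  refine ENNReal.tsum_tsum_ofReal_of_hasSum (fun x y => ?_) (fun x => ?_) hsum
  · simp only [Fin.sum_univ_one, jointPmf, Fin.prod_univ_one, poissonPmf]
    positivity
  · simpa [jointPmf, estO_one_apply, mul_assoc] using
      (hasSum_lossO_one hl.ne' (x 0)).mul_right (poissonPmf (lam 0) (x 0))

theorem stmt_7 :
    (1 / 2 : ℝ≥0∞) < (⨆ lam ∈ {l : Fin 1 → ℝ | ∀ i, 0 < l i}, risk 1 (estO 1) lam) ∧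
    ∀ lam : Fin 1 → ℝ, (∀ i, 0 < lam i) → 1 / 3 < lam 0 →
      (1 / 2 : ℝ≥0∞) < risk 1 (estO 1) lam := by
  have half_lt : ∀ lam : Fin 1 → ℝ, (∀ i, 0 < lam i) → 1 / 3 < lam 0 →
      (1 / 2 : ℝ≥0∞) < risk 1 (estO 1) lam := by
    intro lam hpos hlam
    have hexcess : 0 < (3 * lam 0 - 1) / 4 * Real.exp (-lam 0) :=
      mul_pos (div_pos (by linarith) four_pos) (Real.exp_pos _)
    rw [risk_estO_one (hpos 0), ENNReal.lt_ofReal_iff_toReal_lt (by simp)]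
    norm_num [hexcess]
  refine ⟨?_, half_lt⟩
  have hone : (fun _ => (1 : ℝ)) ∈ {l : Fin 1 → ℝ | ∀ i, 0 < l i} := fun _ => one_pos
  exact (half_lt _ hone (by norm_num)).trans_le (le_biSup _ hone)
end
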